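/- arXiv:2506.23780 — 5 statements merged into one kernel-verified Lean document; each statement's English description precedes it below -/
import Mathlib

section
/- (Proposition 1.) Let x̄ : F → ℝ be an allocation, ȳ : F → ℝ with ȳ(f) = 1 for every f ∈ F, μ̄ ∈ ℝ, and M ∈ ℝ. If μ̄ > Q(x̄), then the optimality cut generated at (x̄, ȳ) is violated by (x̄, ȳ, μ̄): μ̄ > C_{x̄}(x̄) + M·(|F| − Σ_{f∈F} ȳ(f)). -/
open Classical

/-- Inventory of finished goods in scenario `s` for allocation `x`. -/
noncomputable def inventory {F S : Type*} [Fintype F]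
    (Y : F → S → ℝ) (x : F → ℝ) (s : S) : ℝ :=
  ∑ f, Y f s * x f

/-- Expected revenue `Q(x)`. -/
noncomputable def expRevenue {F S : Type*} [Fintype F] [Fintype S]
    (π : S → ℝ) (Y : F → S → ℝ) (D : S → ℝ) (P O : ℝ) (x : F → ℝ) : ℝ :=
  ∑ s, π s * (P * min (inventory Y x s) (D s) + O * max (inventory Y x s - D s) 0)

/-- The scenarios `S↑(x̄)` with inventory exceeding demand. -/
noncomputable def upSet {F S : Type*} [Fintype F] [Fintype S]
    (Y : F → S → ℝ) (D : S → ℝ) (xbar : F → ℝ) : Finset S :=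
  Finset.univ.filter (fun s => D s < inventory Y xbar s)

/-- Benders cut expression generated at reference allocation `x̄`, evaluated at `x`. -/
noncomputable def bendersCut {F S : Type*} [Fintype F] [Fintype S]
    (π : S → ℝ) (Y : F → S → ℝ) (D : S → ℝ) (P O : ℝ) (xbar x : F → ℝ) : ℝ :=
  (∑ s ∈ Finset.univ \ upSet Y D xbar, π s * (P * inventory Y x s)) +
    ∑ s ∈ upSet Y D xbar, π s * (O * inventory Y x s + (P - O) * D s)

/-- Proposition 1: if `μ̄ > Q(x̄)` then the optimality cut generated
at `(x̄, ȳ)` (with `ȳ ≡ 1`) is violated by `(x̄, ȳ, μ̄)`. -/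
theorem cut_violated_at_generation {F S : Type*} [Fintype F] [Fintype S]
    (π : S → ℝ) (Y : F → S → ℝ) (D : S → ℝ) (P O : ℝ)
    (xbar : F → ℝ) (ybar : F → ℝ) (hy : ∀ f, ybar f = 1) (μbar M : ℝ)
    (hμ : μbar > expRevenue π Y D P O xbar) :
    μbar > bendersCut π Y D P O xbar xbar +
      M * ((Fintype.card F : ℝ) - ∑ f, ybar f) := by

  have hyc : (∑ f, ybar f) = (Fintype.card F : ℝ) := by
    simp [hy, Finset.sum_const, Finset.card_univ]
  have hcut : bendersCut π Y D P O xbar xbar = expRevenue π Y D P O xbar := by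
    unfold bendersCut expRevenue
    rw [← Finset.sum_sdiff (Finset.subset_univ (upSet Y D xbar))]
    congr 1
    · apply Finset.sum_congr rfl
      intro s hs
      simp only [upSet, Finset.mem_sdiff, Finset.mem_filter, Finset.mem_univ,
        true_and, not_lt] at hs
      rw [min_eq_left hs, max_eq_right (by linarith)]
      ring
    · apply Finset.sum_congr rfl
      intro s hs
      simp only [upSet, Finset.mem_filter, Finset.mem_univ, true_and] at hs
      rw [min_eq_right hs.le, max_eq_left (by linarith)]
      ring
  rw [hcut, hyc]
  simpa using hμ
end

section
/- (Corollary 1.) Let x̄, x̂ : F → ℝ be two allocations inducing the same scenario partition, i.e. S↑(x̂) = S↑(x̄). Then the cut generated at x̄, evaluated at x̂, equals the exact expected revenue: C_{x̄}(x̂) = Q(x̂). Consequently, for any μ̂ ∈ ℝ with μ̂ > Q(x̂), the cut generated at x̄ is violated at (x̂, μ̂): μ̂ > C_{x̄}(x̂). -/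
open Classical

/-- Corollary 1: if `x̂` induces the same scenario partition as `x̄`,
then the cut generated at `x̄` is exact at `x̂`, i.e. `C_{x̄}(x̂) = Q(x̂)`; consequently
any `μ̂ > Q(x̂)` violates the cut. -/
theorem cut_exact_on_same_partition {F S : Type*} [Fintype F] [Fintype S]
    (π : S → ℝ) (Y : F → S → ℝ) (D : S → ℝ) (P O : ℝ)
    (xbar xhat : F → ℝ)
    (hpart : upSet Y D xhat = upSet Y D xbar) :
    bendersCut π Y D P O xbar xhat = expRevenue π Y D P O xhat ∧
      ∀ μhat : ℝ, μhat > expRevenue π Y D P O xhat →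
        μhat > bendersCut π Y D P O xbar xhat := by
  have key : bendersCut π Y D P O xbar xhat = expRevenue π Y D P O xhat := by
    rw [bendersCut, expRevenue, ← hpart,
      ← Finset.sum_sdiff (Finset.subset_univ (upSet Y D xhat))]
    congr 1
    · apply Finset.sum_congr rfl
      intro s hs
      simp only [Finset.mem_sdiff, upSet, Finset.mem_filter, Finset.mem_univ, true_and,
        not_lt] at hs
      rw [min_eq_left hs, max_eq_right (by linarith)]
      ring
    · apply Finset.sum_congr rfl
      intro s hs
      simp only [upSet, Finset.mem_filter, Finset.mem_univ, true_and] at hs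
      rw [min_eq_right hs.le, max_eq_left (by linarith)]
      ring
  exact ⟨key, fun μ h => key ▸ h⟩
end

section
/- (Lemma 3, inequality (18).) Assume π(s) ≥ 0 for all s ∈ S and O ≤ P. Then for every reference allocation x̄ : F → ℝ and every allocation x* : F → ℝ, the expected revenue is over-estimated by the cut expression built with the scenario partition induced by x̄: Q(x*) ≤ Σ_{s∈S↓(x̄)} π(s)·P·z_{x*}(s) + Σ_{s∈S↑(x̄)} π(s)·(O·z_{x*}(s) + (P−O)·D(s)), i.e. Q(x*) ≤ C_{x̄}(x*). -/
open Classical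

/-- Lemma 3, inequality (18): the expected revenue is over-estimated
by the cut expression built with the scenario partition induced by `x̄`:
`Q(x*) ≤ C_{x̄}(x*)`. -/
theorem expRevenue_le_bendersCut {F S : Type*} [Fintype F] [Fintype S]
    (π : S → ℝ) (Y : F → S → ℝ) (D : S → ℝ) (P O : ℝ)
    (hπ : ∀ s, 0 ≤ π s) (hOP : O ≤ P)
    (xbar xstar : F → ℝ) :
    expRevenue π Y D P O xstar ≤ bendersCut π Y D P O xbar xstar := by
  rw [expRevenue, bendersCut,
    ← Finset.sum_sdiff (Finset.subset_univ (upSet Y D xbar))]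
  refine add_le_add (Finset.sum_le_sum fun s _ => ?_) (Finset.sum_le_sum fun s _ => ?_)
  · set z := inventory Y xstar s
    have h1 : P * min z (D s) + O * max (z - D s) 0 ≤ P * z := by
      rcases le_total z (D s) with h | h
      · rw [min_eq_left h, max_eq_right (by linarith)]; linarith
      · rw [min_eq_right h, max_eq_left (by linarith)]; nlinarith
    exact mul_le_mul_of_nonneg_left h1 (hπ s)
  · set z := inventory Y xstar s
    have h1 : P * min z (D s) + O * max (z - D s) 0 ≤ O * z + (P - O) * D s := by
      rcases le_total z (D s) with h | h
      · rw [min_eq_left h, max_eq_right (by linarith)]; nlinarith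
      · rw [min_eq_right h, max_eq_left (by linarith)]; linarith
    exact mul_le_mul_of_nonneg_left h1 (hπ s)
end

section
/- (Core of Proposition 3: once all optimality cuts are present, the approximation is exact.) Let x : F → ℝ be an allocation and μ ∈ ℝ. Suppose that for every subset T ⊆ S the cut inequality μ ≤ Σ_{s∈S\T} π(s)·P·z_x(s) + Σ_{s∈T} π(s)·(O·z_x(s) + (P−O)·D(s)) holds. Then μ ≤ Q(x). -/
open Classical

/-- core of Proposition 3: if `μ` satisfies the cut inequality for
every subset `T ⊆ S` of scenarios (those evaluated at the discounted expression),
then `μ ≤ Q(x)`. -/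
theorem all_cuts_imply_exact {F S : Type*} [Fintype F] [Fintype S]
    (π : S → ℝ) (Y : F → S → ℝ) (D : S → ℝ) (P O : ℝ)
    (x : F → ℝ) (μ : ℝ)
    (hcuts : ∀ T : Finset S,
      μ ≤ (∑ s ∈ Finset.univ \ T, π s * (P * inventory Y x s)) +
        ∑ s ∈ T, π s * (O * inventory Y x s + (P - O) * D s)) :
    μ ≤ expRevenue π Y D P O x := by
  have h := hcuts (upSet Y D x)
  have heq : (∑ s ∈ Finset.univ \ upSet Y D x, π s * (P * inventory Y x s)) +
      ∑ s ∈ upSet Y D x, π s * (O * inventory Y x s + (P - O) * D s)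
      = expRevenue π Y D P O x := by
    unfold expRevenue
    rw [← Finset.sum_sdiff (Finset.subset_univ (upSet Y D x))]
    congr 1
    · apply Finset.sum_congr rfl
      intro s hs
      simp only [upSet, Finset.mem_sdiff, Finset.mem_filter, Finset.mem_univ,
        true_and, not_lt] at hs
      rw [min_eq_left hs, max_eq_right (by linarith)]
      ring
    · apply Finset.sum_congr rfl
      intro s hs
      simp only [upSet, Finset.mem_filter, Finset.mem_univ, true_and] at hs
      rw [min_eq_right hs.le, max_eq_left (by linarith)]
      ring
  linarith
end

section
/- (Proposition 4, valid inequality VI2.) Let 𝒟 be a finite nonempty index set of distributions, each with scenario weights π_d : S → ℝ satisfying π_d(s) ≥ 0 for all s, yields Y_d : F → S → ℝ, and demands D_d : S → ℝ; let 0 ≤ O ≤ P. Define the expected yield Y^E_d(f) = Σ_{s∈S} π_d(s)·Y_d(f)(s). Then for every d ∈ 𝒟 and every allocation x : F → ℝ with x(f) ≥ 0 for all f, the expected revenue under distribution d satisfies Q_d(x) ≤ P·Σ_{f∈F} (max_{d'∈𝒟} Y^E_{d'}(f))·x(f). -/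
/-- Inventory of finished goods in scenario `s` under distribution-specific yields. -/
noncomputable def inventoryD {F S : Type*} [Fintype F]
    (Y : F → S → ℝ) (x : F → ℝ) (s : S) : ℝ :=
  ∑ f, Y f s * x f

/-- Expected revenue under a distribution with weights `π`, yields `Y`, demands `D`. -/
noncomputable def expRevenueD {F S : Type*} [Fintype F] [Fintype S]
    (π : S → ℝ) (Y : F → S → ℝ) (D : S → ℝ) (P O : ℝ) (x : F → ℝ) : ℝ :=
  ∑ s, π s * (P * min (inventoryD Y x s) (D s) + O * max (inventoryD Y x s - D s) 0)

/-- Expected yield of facility `f` under distribution `d`. -/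
noncomputable def expYield {F S : Type*} [Fintype S]
    (π : S → ℝ) (Y : F → S → ℝ) (f : F) : ℝ :=
  ∑ s, π s * Y f s

/-- Proposition 4, valid inequality VI2: for every distribution `d`
and every nonnegative allocation `x`, the expected revenue satisfies
`Q_d(x) ≤ P·Σ_f (max_{d'} Y^E_{d'}(f))·x(f)`. -/
theorem VI2 {F S 𝒟 : Type*} [Fintype F] [Fintype S] [Fintype 𝒟]
    [Nonempty F] [Nonempty S] [Nonempty 𝒟]
    (π : 𝒟 → S → ℝ) (Y : 𝒟 → F → S → ℝ) (D : 𝒟 → S → ℝ) (P O : ℝ)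
    (hπ : ∀ d s, 0 ≤ π d s) (hO : 0 ≤ O) (hOP : O ≤ P)
    (d : 𝒟) (x : F → ℝ) (hx : ∀ f, 0 ≤ x f) :
    expRevenueD (π d) (Y d) (D d) P O x ≤
      P * ∑ f, (Finset.univ.sup' Finset.univ_nonempty
        (fun d' : 𝒟 => expYield (π d') (Y d') f)) * x f := by
  have hP : 0 ≤ P := le_trans hO hOP
  have step1 : expRevenueD (π d) (Y d) (D d) P O x ≤
      P * ∑ f, expYield (π d) (Y d) f * x f := by
    have h1 : ∀ s, π d s * (P * min (inventoryD (Y d) x s) (D d s)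
        + O * max (inventoryD (Y d) x s - (D d) s) 0)
        ≤ π d s * (P * inventoryD (Y d) x s) := by
      intro s
      apply mul_le_mul_of_nonneg_left _ (hπ d s)
      have hid : min (inventoryD (Y d) x s) (D d s)
          + max (inventoryD (Y d) x s - D d s) 0 = inventoryD (Y d) x s := by
        rcases le_total (inventoryD (Y d) x s) (D d s) with h | h
        · rw [min_eq_left h, max_eq_right (by linarith)]; ring
        · rw [min_eq_right h, max_eq_left (by linarith)]; ring
      have : O * max (inventoryD (Y d) x s - D d s) 0
          ≤ P * max (inventoryD (Y d) x s - D d s) 0 :=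
        mul_le_mul_of_nonneg_right hOP (le_max_right _ _)
      nlinarith [this, hid]
    calc expRevenueD (π d) (Y d) (D d) P O x
        ≤ ∑ s, π d s * (P * inventoryD (Y d) x s) :=
          Finset.sum_le_sum (fun s _ => h1 s)
      _ = P * ∑ f, expYield (π d) (Y d) f * x f := by
          unfold inventoryD expYield
          simp only [Finset.mul_sum, Finset.sum_mul]
          rw [Finset.sum_comm]
          apply Finset.sum_congr rfl
          intro f _
          apply Finset.sum_congr rfl
          intro s _
          ring
  refine le_trans step1 ?_
  apply mul_le_mul_of_nonneg_left _ hP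
  apply Finset.sum_le_sum
  intro f _
  apply mul_le_mul_of_nonneg_right _ (hx f)
  exact Finset.le_sup' (fun d' : 𝒟 => expYield (π d') (Y d') f) (Finset.mem_univ d)
end
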